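/- Let H and 𝒦 be separable complex Hilbert spaces, U : ℝ → U(H) a strongly continuous unitary representation, Λ the translation representation (Λ(t)Φ)(s) = Φ(s − t) on L²(ℝ; 𝒦), and W : H → L²(ℝ; 𝒦) an isometry with W U(t) = Λ(t) W for all t. Let 𝒫 = {a*a : a ∈ B(H), C_a < ∞} and 𝒟 = span_ℂ 𝒫. Then 𝒟 is a *-subalgebra of B(H) (closed under addition, scalar multiplication, products and adjoints), and 𝒟 is dense in B(H) in both the weak operator topology and the strong operator topology. -/

import Mathlib

open MeasureTheory
open scoped ENNReal NNReal

local notation "⟪" x ", " y "⟫_ℂ" => @inner ℂ _ _ x y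

noncomputable section

/-- `Csq U a` is the square `C_a²` of the constant
`C_a = (sup_{‖ψ‖=1} ∫_ℝ ‖a U(t)* ψ‖² dt)^{1/2} ∈ [0,∞]`. -/
def Csq {H : Type*} [NormedAddCommGroup H] [InnerProductSpace ℂ H] [CompleteSpace H]
    (U : ℝ → (H →L[ℂ] H)) (a : H →L[ℂ] H) : ℝ≥0∞ :=
  ⨆ ψ : {ψ : H // ‖ψ‖ = 1}, ∫⁻ t : ℝ, (‖a (star (U t) (ψ : H))‖₊ : ℝ≥0∞) ^ 2

/-- The set `𝒫 = {a*a : C_a < ∞}` of positive `t`-integrable operators. -/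
def posTIntegrable {H : Type*} [NormedAddCommGroup H] [InnerProductSpace ℂ H] [CompleteSpace H]
    (U : ℝ → (H →L[ℂ] H)) : Set (H →L[ℂ] H) :=
  {x | ∃ a : H →L[ℂ] H, Csq U a ≠ ⊤ ∧ x = star a * a}

/-!
The operators `a` with `C_a < ∞` form a left ideal `L` of `B(H)`, and polarization shows that
`span {c* c : c ∈ L}` contains `a* b` for all `a, b ∈ L`. Hence `𝒟` is a *-algebra containing
`x T y` for all `x, y ∈ 𝒫` and every `T ∈ B(H)`.

For a bounded set `A ⊆ ℝ`, the compression `a_A = W* 1_A W` of the multiplication by `1_A` lies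
in `L`: by the intertwining relation and Tonelli,
`∫ ‖a_A U(t)* ψ‖² dt ≤ ∫∫_A ‖Wψ(s + t)‖² ds dt = |A| ‖ψ‖²`.
As `A` increases to `ℝ`, the self-adjoint contractions `a_A` tend strongly to `W* W = 1`, so
`e_A = a_A* a_A ∈ 𝒫` and `e_A T e_A ∈ 𝒟` tend strongly, hence also weakly, to `T`.
-/

open Filter Topology Set

section StarSquares

variable {A : Type*} [Ring A] [StarRing A] [Algebra ℂ A] [StarModule ℂ A]

theorem four_smul_star_mul (a b : A) :
    (4 : ℂ) • (star a * b) = star (a + b) * (a + b) - star (a - b) * (a - b)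
      - Complex.I • (star (a + Complex.I • b) * (a + Complex.I • b))
      + Complex.I • (star (a - Complex.I • b) * (a - Complex.I • b)) := by
  simp only [star_add, star_sub, star_smul, Complex.star_def, Complex.conj_I, add_mul, sub_mul,
    mul_add, mul_sub, smul_mul_assoc, mul_smul_comm, smul_add, smul_sub, smul_smul, neg_smul,
    neg_mul, Complex.I_mul_I, smul_neg]
  module

def Ideal.starSquares (L : Ideal A) : Set A := {x | ∃ c ∈ L, x = star c * c}

namespace Ideal

variable (L : Ideal A)

theorem star_mul_mem_span_starSquares {a b : A} (ha : a ∈ L) (hb : b ∈ L) :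
    star a * b ∈ Submodule.span ℂ L.starSquares := by
  have hmem : ∀ c ∈ L, star c * c ∈ Submodule.span ℂ L.starSquares :=
    fun c hc => Submodule.subset_span ⟨c, hc, rfl⟩
  have hIb : Complex.I • b ∈ L := L.smul_of_tower_mem _ hb
  rw [← inv_smul_smul₀ (by norm_num : (4 : ℂ) ≠ 0) (star a * b), four_smul_star_mul]
  refine Submodule.smul_mem _ _ (add_mem (sub_mem (sub_mem ?_ ?_) ?_) ?_)
  · exact hmem _ (add_mem ha hb)
  · exact hmem _ (sub_mem ha hb)
  · exact Submodule.smul_mem _ _ (hmem _ (add_mem ha hIb))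
  · exact Submodule.smul_mem _ _ (hmem _ (sub_mem ha hIb))

theorem mul_mul_mem_span_starSquares {x y : A} (hx : x ∈ L.starSquares)
    (hy : y ∈ L.starSquares) (c : A) : x * c * y ∈ Submodule.span ℂ L.starSquares := by
  obtain ⟨a, ha, rfl⟩ := hx
  obtain ⟨b, hb, rfl⟩ := hy
  have hb' : a * c * star b * b ∈ L := L.smul_mem (a * c * star b) hb
  simpa only [mul_assoc] using L.star_mul_mem_span_starSquares ha hb'

theorem mul_mem_span_starSquares {x y : A} (hx : x ∈ Submodule.span ℂ L.starSquares)
    (hy : y ∈ Submodule.span ℂ L.starSquares) : x * y ∈ Submodule.span ℂ L.starSquares := by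
  have hle : Submodule.span ℂ L.starSquares * Submodule.span ℂ L.starSquares ≤
      Submodule.span ℂ L.starSquares := by
    rw [Submodule.span_mul_span, Submodule.span_le]
    rintro _ ⟨x, hx, y, hy, rfl⟩
    simpa using L.mul_mul_mem_span_starSquares hx hy 1
  exact hle (Submodule.mul_mem_mul hx hy)

theorem star_mem_span_starSquares {x : A} (hx : x ∈ Submodule.span ℂ L.starSquares) :
    star x ∈ Submodule.span ℂ L.starSquares := by
  induction hx using Submodule.span_induction with
  | mem x hx =>
    obtain ⟨c, hc, rfl⟩ := hx
    rw [star_mul, star_star]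
    exact Submodule.subset_span ⟨c, hc, rfl⟩
  | zero => simp
  | add x y _ _ hx hy => simpa using add_mem hx hy
  | smul r x _ hx => simpa using Submodule.smul_mem _ (star r) hx

end Ideal

end StarSquares

namespace MeasureTheory

variable {α : Type*} [MeasurableSpace α] {μ : Measure α}

theorem tendsto_setLIntegral_compl_atTop {s : ℕ → Set α} (hs : ∀ n, MeasurableSet (s n))
    (hmono : Monotone s) (hcover : ⋃ n, s n = univ) {f : α → ℝ≥0∞} (hf : ∫⁻ x, f x ∂μ ≠ ∞) :
    Tendsto (fun n => ∫⁻ x in (s n)ᶜ, f x ∂μ) atTop (𝓝 0) := by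
  have hν := tendsto_measure_iInter_atTop (μ := μ.withDensity f)
    (fun n => (hs n).compl.nullMeasurableSet) (fun _ _ h => compl_subset_compl.2 (hmono h))
    ⟨0, ne_top_of_le_ne_top (by simpa using hf) (measure_mono (subset_univ _))⟩
  rw [← compl_iUnion, hcover, compl_univ, measure_empty] at hν
  simpa [Function.comp_def, withDensity_apply _ (hs _).compl] using hν

theorem eLpNorm_two_pow_two {E : Type*} [NormedAddCommGroup E] (f : α → E) :
    eLpNorm f 2 μ ^ 2 = ∫⁻ x, ‖f x‖ₑ ^ 2 ∂μ := by
  simpa [ENNReal.rpow_two] using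
    eLpNorm_nnreal_pow_eq_lintegral (μ := μ) (f := f) (p := 2) two_ne_zero

theorem lintegral_setLIntegral_add_right {G : Type*} [AddGroup G] [MeasurableSpace G]
    [MeasurableAdd₂ G] {μ : Measure G} [SFinite μ] [μ.IsAddLeftInvariant] {F : G → ℝ≥0∞}
    (hF : Measurable F) (A : Set G) :
    ∫⁻ t, ∫⁻ s in A, F (s + t) ∂μ ∂μ = μ A * ∫⁻ x, F x ∂μ := by
  rw [lintegral_lintegral_swap (f := fun t s => F (s + t))
    (hF.comp (measurable_snd.add measurable_fst)).aemeasurable]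
  simp_rw [lintegral_add_left_eq_self F]
  rw [setLIntegral_const, mul_comm]

namespace Lp

section Generic

variable (𝕜 : Type*) {E : Type*} [NormedField 𝕜] [NormedAddCommGroup E] [NormedSpace 𝕜 E]
  {p : ℝ≥0∞} {s : Set α}

theorem norm_indicator_toLp_le (hs : MeasurableSet s) (g : Lp E p μ) :
    ‖((Lp.memLp g).indicator hs).toLp (s.indicator g)‖ ≤ ‖g‖ := by
  rw [Lp.norm_toLp, Lp.norm_def]
  exact ENNReal.toReal_mono (Lp.eLpNorm_ne_top g) (eLpNorm_indicator_le _)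

variable [Fact (1 ≤ p)]

def indicatorCLM (hs : MeasurableSet s) : Lp E p μ →L[𝕜] Lp E p μ :=
  LinearMap.mkContinuous
    { toFun := fun g => ((Lp.memLp g).indicator hs).toLp (s.indicator g)
      map_add' := fun f g => by
        rw [← MemLp.toLp_add]
        refine MemLp.toLp_congr _ _ ?_
        filter_upwards [AEEqFun.coeFn_add f.val g.val] with x hx
        by_cases hxs : x ∈ s <;> simp [hxs, hx]
      map_smul' := fun c g => by
        rw [RingHom.id_apply, ← MemLp.toLp_const_smul]
        refine MemLp.toLp_congr _ _ ?_
        filter_upwards [Lp.coeFn_smul c g] with x hx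
        by_cases hxs : x ∈ s <;> simp [hxs, hx] }
    1 fun g => (norm_indicator_toLp_le hs g).trans (one_mul _).symm.le

variable {𝕜}

theorem indicatorCLM_apply (hs : MeasurableSet s) (g : Lp E p μ) :
    indicatorCLM 𝕜 hs g = ((Lp.memLp g).indicator hs).toLp (s.indicator g) :=
  rfl

theorem coeFn_indicatorCLM (hs : MeasurableSet s) (g : Lp E p μ) :
    indicatorCLM 𝕜 hs g =ᵐ[μ] s.indicator g := by
  rw [indicatorCLM_apply]
  exact MemLp.coeFn_toLp _

theorem norm_indicatorCLM_apply_le (hs : MeasurableSet s) (g : Lp E p μ) :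
    ‖indicatorCLM 𝕜 hs g‖ ≤ ‖g‖ := by
  rw [indicatorCLM_apply]
  exact norm_indicator_toLp_le hs g

theorem tendsto_indicatorCLM (hp : p ≠ ∞) {s : ℕ → Set α} (hs : ∀ n, MeasurableSet (s n))
    (hmono : Monotone s) (hcover : ⋃ n, s n = univ) (g : Lp E p μ) :
    Tendsto (fun n => indicatorCLM 𝕜 (hs n) g) atTop (𝓝 g) := by
  have hp0 : p ≠ 0 := (zero_lt_one.trans_le Fact.out).ne'
  have hq : 0 < p.toReal := ENNReal.toReal_pos hp0 hp
  have hdist : ∀ n, eLpNorm (⇑(indicatorCLM 𝕜 (hs n) g) - ⇑g) p μ =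
      (∫⁻ x in (s n)ᶜ, ‖g x‖ₑ ^ p.toReal ∂μ) ^ (1 / p.toReal) := fun n => by
    have hae : ⇑(indicatorCLM 𝕜 (hs n) g) - ⇑g =ᵐ[μ] -(s n)ᶜ.indicator g := by
      filter_upwards [coeFn_indicatorCLM (𝕜 := 𝕜) (hs n) g] with x hx
      by_cases hxs : x ∈ s n <;> simp [hx, hxs]
    rw [eLpNorm_congr_ae hae, eLpNorm_neg, eLpNorm_indicator_eq_eLpNorm_restrict (hs n).compl,
      eLpNorm_eq_lintegral_rpow_enorm_toReal hp0 hp]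
  rw [tendsto_Lp_iff_tendsto_eLpNorm']
  simp_rw [hdist]
  have hlim := (ENNReal.continuous_rpow_const (y := 1 / p.toReal)).tendsto 0 |>.comp
    (tendsto_setLIntegral_compl_atTop hs hmono hcover
      (lintegral_rpow_enorm_lt_top_of_eLpNorm_lt_top hp0 hp (Lp.eLpNorm_lt_top g)).ne)
  simpa [Function.comp_def, ENNReal.zero_rpow_of_pos (inv_pos.2 hq)] using hlim

theorem enorm_indicatorCLM_sq (hs : MeasurableSet s) (g : Lp E 2 μ) :
    ‖indicatorCLM 𝕜 hs g‖ₑ ^ 2 = ∫⁻ x in s, ‖g x‖ₑ ^ 2 ∂μ := by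
  rw [Lp.enorm_def, eLpNorm_congr_ae (coeFn_indicatorCLM hs g),
    eLpNorm_indicator_eq_eLpNorm_restrict hs, eLpNorm_two_pow_two]

end Generic

theorem isSelfAdjoint_indicatorCLM {𝕜 E : Type*} [RCLike 𝕜] [NormedAddCommGroup E]
    [InnerProductSpace 𝕜 E] [CompleteSpace E] {s : Set α} (hs : MeasurableSet s) :
    IsSelfAdjoint (indicatorCLM 𝕜 hs : Lp E 2 μ →L[𝕜] Lp E 2 μ) := by
  rw [ContinuousLinearMap.isSelfAdjoint_iff_isSymmetric]
  intro f g
  rw [L2.inner_def, L2.inner_def]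
  refine integral_congr_ae ?_
  filter_upwards [coeFn_indicatorCLM (𝕜 := 𝕜) hs f, coeFn_indicatorCLM (𝕜 := 𝕜) hs g]
    with x hf hg
  by_cases hx : x ∈ s <;> simp [hf, hg, hx]

end Lp

end MeasureTheory

theorem tendsto_apply_of_contractive {ι 𝕜 E F : Type*} [NormedField 𝕜] [NormedAddCommGroup E]
    [NormedSpace 𝕜 E] [NormedAddCommGroup F] [NormedSpace 𝕜 F] {l : Filter ι}
    {a : ι → E →L[𝕜] F} (ha : ∀ i x, ‖a i x‖ ≤ ‖x‖) {x : ι → E} {y : E} {z : F}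
    (hx : Tendsto x l (𝓝 y)) (hy : Tendsto (fun i => a i y) l (𝓝 z)) :
    Tendsto (fun i => a i (x i)) l (𝓝 z) := by
  have h0 : Tendsto (fun i => a i (x i - y)) l (𝓝 0) :=
    squeeze_zero_norm (fun i => ha i _) (tendsto_iff_norm_sub_tendsto_zero.1 hx)
  simpa using hy.add h0

theorem tendsto_mul_mul_apply_of_contractive {ι 𝕜 E : Type*} [NormedField 𝕜]
    [NormedAddCommGroup E] [NormedSpace 𝕜 E] {l : Filter ι} {e : ι → E →L[𝕜] E}
    (he : ∀ i x, ‖e i x‖ ≤ ‖x‖) (he_lim : ∀ x, Tendsto (fun i => e i x) l (𝓝 x))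
    (T : E →L[𝕜] E) (x : E) : Tendsto (fun i => (e i * T * e i) x) l (𝓝 (T x)) :=
  tendsto_apply_of_contractive he ((T.continuous.tendsto x).comp (he_lim x)) (he_lim (T x))

namespace LinearIsometry

variable {𝕜 H E α : Type*} [RCLike 𝕜] [NormedAddCommGroup H] [InnerProductSpace 𝕜 H]
  [CompleteSpace H] [NormedAddCommGroup E] [InnerProductSpace 𝕜 E] [CompleteSpace E]
  [MeasurableSpace α] {μ : Measure α} (W : H →ₗᵢ[𝕜] Lp E 2 μ) {s : Set α}

def compressIndicator (hs : MeasurableSet s) : H →L[𝕜] H :=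
  ContinuousLinearMap.adjoint W.toContinuousLinearMap ∘L Lp.indicatorCLM 𝕜 hs ∘L
    W.toContinuousLinearMap

theorem isSelfAdjoint_compressIndicator (hs : MeasurableSet s) :
    IsSelfAdjoint (W.compressIndicator hs) := by
  rw [IsSelfAdjoint, ContinuousLinearMap.star_eq_adjoint, compressIndicator,
    ContinuousLinearMap.adjoint_comp, ContinuousLinearMap.adjoint_comp,
    ContinuousLinearMap.adjoint_adjoint, ← ContinuousLinearMap.star_eq_adjoint,
    (Lp.isSelfAdjoint_indicatorCLM hs).star_eq, ContinuousLinearMap.comp_assoc]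

theorem norm_compressIndicator_apply_le_indicator (hs : MeasurableSet s) (x : H) :
    ‖W.compressIndicator hs x‖ ≤ ‖Lp.indicatorCLM 𝕜 hs (W x)‖ := by
  refine (ContinuousLinearMap.adjoint W.toContinuousLinearMap).le_of_opNorm_le ?_ _ |>.trans
    (one_mul _).le
  rw [LinearIsometryEquiv.norm_map]
  exact W.norm_toContinuousLinearMap_le

theorem norm_compressIndicator_apply_le (hs : MeasurableSet s) (x : H) :
    ‖W.compressIndicator hs x‖ ≤ ‖x‖ :=
  (W.norm_compressIndicator_apply_le_indicator hs x).trans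
    ((Lp.norm_indicatorCLM_apply_le hs _).trans_eq (W.norm_map x))

theorem tendsto_compressIndicator_apply {s : ℕ → Set α} (hs : ∀ n, MeasurableSet (s n))
    (hmono : Monotone s) (hcover : ⋃ n, s n = univ) (x : H) :
    Tendsto (fun n => W.compressIndicator (hs n) x) atTop (𝓝 x) := by
  have hWW : ContinuousLinearMap.adjoint W.toContinuousLinearMap (W x) = x := by
    change (ContinuousLinearMap.adjoint W.toContinuousLinearMap ∘L W.toContinuousLinearMap) x = x
    rw [(ContinuousLinearMap.norm_map_iff_adjoint_comp_self _).1 W.norm_map]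
    rfl
  have h := ((ContinuousLinearMap.adjoint W.toContinuousLinearMap).continuous.tendsto (W x)).comp
    (Lp.tendsto_indicatorCLM (𝕜 := 𝕜) ENNReal.ofNat_ne_top hs hmono hcover (W x))
  rw [hWW] at h
  exact h

end LinearIsometry

theorem star_eq_apply_neg {M : Type*} [Monoid M] [StarMul M] {U : ℝ → M} (hU0 : U 0 = 1)
    (hUadd : ∀ s t : ℝ, U (s + t) = U s * U t) (hUuni : ∀ t : ℝ, U t ∈ unitary M) (t : ℝ) :
    star (U t) = U (-t) :=
  left_inv_eq_right_inv (hUuni t).1 (by rw [← hUadd, add_neg_cancel, hU0])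

theorem enorm_add_sq_le {E : Type*} [SeminormedAddCommGroup E] (x y : E) :
    ‖x + y‖ₑ ^ 2 ≤ 2 * (‖x‖ₑ ^ 2 + ‖y‖ₑ ^ 2) := by
  simp only [enorm_eq_nnnorm]
  exact_mod_cast (pow_le_pow_left₀ zero_le (nnnorm_add_le x y) 2).trans add_sq_le

section TIntegrable

variable {H : Type*} [NormedAddCommGroup H] [InnerProductSpace ℂ H] [CompleteSpace H]
  (U : ℝ → (H →L[ℂ] H))

theorem lintegral_le_Csq (a : H →L[ℂ] H) {ψ : H} (hψ : ‖ψ‖ = 1) :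
    ∫⁻ t, ‖a (star (U t) ψ)‖ₑ ^ 2 ≤ Csq U a :=
  le_iSup (fun φ : {φ : H // ‖φ‖ = 1} => ∫⁻ t, ‖a (star (U t) (φ : H))‖ₑ ^ 2) ⟨ψ, hψ⟩

theorem Csq_le {a : H →L[ℂ] H} {c : ℝ≥0∞}
    (h : ∀ ψ : H, ‖ψ‖ = 1 → ∫⁻ t, ‖a (star (U t) ψ)‖ₑ ^ 2 ≤ c) : Csq U a ≤ c :=
  iSup_le fun ψ => h ψ ψ.2

theorem Csq_zero : Csq U 0 = 0 :=
  le_antisymm (Csq_le U fun _ _ => by simp) bot_le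

theorem Csq_mul_le (b a : H →L[ℂ] H) : Csq U (b * a) ≤ ‖b‖ₑ ^ 2 * Csq U a := by
  refine Csq_le U fun ψ hψ => ?_
  calc ∫⁻ t, ‖(b * a) (star (U t) ψ)‖ₑ ^ 2
      ≤ ∫⁻ t, ‖b‖ₑ ^ 2 * ‖a (star (U t) ψ)‖ₑ ^ 2 := by
        gcongr with t
        rw [← mul_pow]
        gcongr
        exact b.le_opENorm _
    _ = ‖b‖ₑ ^ 2 * ∫⁻ t, ‖a (star (U t) ψ)‖ₑ ^ 2 := lintegral_const_mul' _ _ (by simp)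
    _ ≤ ‖b‖ₑ ^ 2 * Csq U a := by gcongr; exact lintegral_le_Csq U a hψ

theorem Csq_add_le (hU : ∀ ψ : H, Continuous fun t => star (U t) ψ) (a b : H →L[ℂ] H) :
    Csq U (a + b) ≤ 2 * (Csq U a + Csq U b) := by
  refine Csq_le U fun ψ hψ => ?_
  have ha : Measurable fun t => ‖a (star (U t) ψ)‖ₑ ^ 2 :=
    ((a.continuous.comp (hU ψ)).enorm.measurable).pow_const 2
  calc ∫⁻ t, ‖(a + b) (star (U t) ψ)‖ₑ ^ 2
      ≤ ∫⁻ t, 2 * (‖a (star (U t) ψ)‖ₑ ^ 2 + ‖b (star (U t) ψ)‖ₑ ^ 2) :=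
        lintegral_mono fun t => enorm_add_sq_le _ _
    _ = 2 * ((∫⁻ t, ‖a (star (U t) ψ)‖ₑ ^ 2) + ∫⁻ t, ‖b (star (U t) ψ)‖ₑ ^ 2) := by
        rw [lintegral_const_mul' _ _ (by simp), lintegral_add_left ha]
    _ ≤ 2 * (Csq U a + Csq U b) := by
        gcongr <;> exact lintegral_le_Csq U _ hψ

def tIntegrable (hU : ∀ ψ : H, Continuous fun t => star (U t) ψ) : Ideal (H →L[ℂ] H) where
  carrier := {a | Csq U a ≠ ⊤}
  zero_mem' := by simp [Csq_zero]
  add_mem' {a b} ha hb :=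
    ne_top_of_le_ne_top (ENNReal.mul_ne_top (by simp) (ENNReal.add_ne_top.2 ⟨ha, hb⟩))
      (Csq_add_le U hU a b)
  smul_mem' b a ha := ne_top_of_le_ne_top (ENNReal.mul_ne_top (by simp) ha) (Csq_mul_le U b a)

theorem posTIntegrable_eq_starSquares (hU : ∀ ψ : H, Continuous fun t => star (U t) ψ) :
    posTIntegrable U = (tIntegrable U hU).starSquares :=
  rfl

variable {K : Type*} [NormedAddCommGroup K] [InnerProductSpace ℂ K] [CompleteSpace K]
  (hUstar : ∀ t, star (U t) = U (-t)) (W : H →ₗᵢ[ℂ] Lp K 2 (volume : Measure ℝ))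
  (hW : ∀ (t : ℝ) (ψ : H), (W (U t ψ) : ℝ → K) =ᵐ[volume] fun s => W ψ (s - t))
include hUstar hW

theorem Csq_compressIndicator_le {A : Set ℝ} (hA : MeasurableSet A) :
    Csq U (W.compressIndicator hA) ≤ volume A := by
  refine Csq_le U fun ψ hψ => ?_
  have hF := (Lp.aestronglyMeasurable (W ψ)).enorm.pow_const 2
  calc ∫⁻ t, ‖W.compressIndicator hA (star (U t) ψ)‖ₑ ^ 2
      ≤ ∫⁻ t, ‖Lp.indicatorCLM ℂ hA (W (U (-t) ψ))‖ₑ ^ 2 := by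
        gcongr with t
        rw [hUstar, enorm_eq_nnnorm, enorm_eq_nnnorm, ENNReal.coe_le_coe]
        exact W.norm_compressIndicator_apply_le_indicator hA _
    _ = ∫⁻ t, ∫⁻ s in A, hF.mk _ (s + t) := by
        refine lintegral_congr fun t => ?_
        rw [Lp.enorm_indicatorCLM_sq]
        refine lintegral_congr_ae (ae_restrict_of_ae ?_)
        filter_upwards [hW (-t) ψ, (measurePreserving_add_right volume t).quasiMeasurePreserving
          |>.ae_eq_comp hF.ae_eq_mk] with s hs hs'
        simpa [hs] using hs'
    _ = volume A * ∫⁻ s, hF.mk _ s := lintegral_setLIntegral_add_right hF.measurable_mk A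
    _ = volume A := by
        rw [← lintegral_congr_ae hF.ae_eq_mk, ← eLpNorm_two_pow_two, ← Lp.enorm_def, W.enorm_map,
          ← ofReal_norm, hψ, ENNReal.ofReal_one, one_pow, mul_one]

theorem exists_posTIntegrable_tendsto_apply :
    ∃ e : ℕ → H →L[ℂ] H, (∀ n, e n ∈ posTIntegrable U) ∧ (∀ n x, ‖e n x‖ ≤ ‖x‖) ∧
      ∀ x, Tendsto (fun n => e n x) atTop (𝓝 x) := by
  have hball : ∀ n : ℕ, MeasurableSet (Metric.closedBall (0 : ℝ) n) :=
    fun _ => measurableSet_closedBall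
  set a : ℕ → H →L[ℂ] H := fun n => W.compressIndicator (hball n)
  have hstar : ∀ n, star (a n) = a n := fun n => (W.isSelfAdjoint_compressIndicator _).star_eq
  have ha_le : ∀ n x, ‖a n x‖ ≤ ‖x‖ := fun n => W.norm_compressIndicator_apply_le (hball n)
  have ha_lim : ∀ x, Tendsto (fun n => a n x) atTop (𝓝 x) :=
    W.tendsto_compressIndicator_apply hball
      (fun _ _ h => Metric.closedBall_subset_closedBall (Nat.cast_le.2 h))
      (Metric.iUnion_closedBall_nat 0)
  refine ⟨fun n => star (a n) * a n, fun n => ⟨a n, ?_, rfl⟩, fun n x => ?_, fun x => ?_⟩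
  · exact ne_top_of_le_ne_top measure_closedBall_lt_top.ne
      (Csq_compressIndicator_le U hUstar W hW (hball n))
  · simp only [hstar, mul_apply_eq_comp]
    exact (ha_le _ _).trans (ha_le _ _)
  · simpa only [hstar, mul_apply_eq_comp] using
      tendsto_apply_of_contractive ha_le (ha_lim x) (ha_lim x)

end TIntegrable

theorem stmt12 {H K : Type*}
    [NormedAddCommGroup H] [InnerProductSpace ℂ H] [CompleteSpace H]
    [NormedAddCommGroup K] [InnerProductSpace ℂ K] [CompleteSpace K]
    (U : ℝ → (H →L[ℂ] H))
    (hU0 : U 0 = 1) (hUadd : ∀ s t : ℝ, U (s + t) = U s * U t)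
    (hUuni : ∀ t : ℝ, U t ∈ unitary (H →L[ℂ] H))
    (hUcont : ∀ ψ : H, Continuous fun t : ℝ => U t ψ)
    (W : H →ₗᵢ[ℂ] Lp K 2 (volume : Measure ℝ))
    (hW : ∀ (t : ℝ) (ψ : H),
        (W (U t ψ) : ℝ → K) =ᵐ[volume] fun s => (W ψ : Lp K 2 (volume : Measure ℝ)) (s - t)) :
    (∀ x ∈ Submodule.span ℂ (posTIntegrable U), ∀ y ∈ Submodule.span ℂ (posTIntegrable U),
        x * y ∈ Submodule.span ℂ (posTIntegrable U)) ∧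
    (∀ x ∈ Submodule.span ℂ (posTIntegrable U), star x ∈ Submodule.span ℂ (posTIntegrable U)) ∧
    (∀ T : H →L[ℂ] H, ∀ ε : ℝ, 0 < ε → ∀ s : Finset (H × H),
        ∃ d ∈ Submodule.span ℂ (posTIntegrable U),
          ∀ p ∈ s, ‖⟪p.1, (T - d) p.2⟫_ℂ‖ < ε) ∧
    (∀ T : H →L[ℂ] H, ∀ ε : ℝ, 0 < ε → ∀ s : Finset H,
        ∃ d ∈ Submodule.span ℂ (posTIntegrable U),
          ∀ ψ ∈ s, ‖(T - d) ψ‖ < ε) := by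
  have hUstar := star_eq_apply_neg hU0 hUadd hUuni
  have hU : ∀ ψ : H, Continuous fun t => star (U t) ψ := fun ψ => by
    simpa only [hUstar, Function.comp_def] using (hUcont ψ).comp continuous_neg
  set L := tIntegrable U hU
  rw [posTIntegrable_eq_starSquares U hU]
  obtain ⟨e, heP, he_le, he_lim⟩ := exists_posTIntegrable_tendsto_apply U hUstar W hW
  have hmem : ∀ T n, e n * T * e n ∈ Submodule.span ℂ L.starSquares :=
    fun T n => L.mul_mul_mem_span_starSquares (heP n) (heP n) T
  have hdiff : ∀ T ψ, Tendsto (fun n => (T - e n * T * e n) ψ) atTop (𝓝 0) := fun T ψ => by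
    simpa using (tendsto_const_nhds (x := T ψ)).sub
      (tendsto_mul_mul_apply_of_contractive he_le he_lim T ψ)
  refine ⟨fun x hx y hy => L.mul_mem_span_starSquares hx hy,
    fun x hx => L.star_mem_span_starSquares hx, fun T ε hε s => ?_, fun T ε hε s => ?_⟩
  · have h : ∀ p ∈ s, ∀ᶠ n in atTop, ‖⟪p.1, (T - e n * T * e n) p.2⟫_ℂ‖ < ε := fun p _ =>
      ((tendsto_const_nhds (x := p.1)).inner (𝕜 := ℂ) (hdiff T p.2)).norm.eventually
        (gt_mem_nhds (by simpa using hε))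
    obtain ⟨n, hn⟩ := ((Finset.eventually_all s).2 h).exists
    exact ⟨_, hmem T n, hn⟩
  · have h : ∀ ψ ∈ s, ∀ᶠ n in atTop, ‖(T - e n * T * e n) ψ‖ < ε := fun ψ _ =>
      (hdiff T ψ).norm.eventually (gt_mem_nhds (by simpa using hε))
    obtain ⟨n, hn⟩ := ((Finset.eventually_all s).2 h).exists
    exact ⟨_, hmem T n, hn⟩
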